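/- arXiv:1306.5637 — 6 statements merged into one kernel-verified Lean document; each statement's English description precedes it below -/
import Mathlib

section
/- If x, y, z are vectors in (Z/2)^n and a, b, c are nonnegative integers such that the Hamming distances satisfy d(x,y) ≤ a+b, d(x,z) ≤ a+c, and d(y,z) ≤ b+c, then there exists a vector v in (Z/2)^n with d(v,x) ≤ a, d(v,y) ≤ b, and d(v,z) ≤ c. -/
/-!
Over `ZMod 2` any three words have a coordinatewise majority `m`, which lies on a geodesic
between each pair: `d(m,x) + d(m,y) = d(x,y)`, and similarly for the other pairs. If `m` is
within the required radii of `x`, `y`, `z` we are done. Otherwise, say `d(m,x) ≥ a`; walking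
from `m` towards `x` by `d(m,x) - a` steps gives a word within `a` of `x`, and by the triangle
inequality through `m` the pairwise hypotheses keep it within `b` of `y` and `c` of `z`.
-/

open Finset

section

variable {ι : Type*} [Fintype ι] {β : ι → Type*} [∀ i, DecidableEq (β i)]

theorem hammingDist_add_hammingDist_eq_of_forall {m x y : ∀ i, β i}
    (h : ∀ i, m i = x i ∨ m i = y i) :
    hammingDist m x + hammingDist m y = hammingDist x y := by
  simp only [hammingDist, card_filter, ← sum_add_distrib]
  refine sum_congr rfl fun i _ => ?_
  rcases h i with hi | hi <;> by_cases hxy : x i = y i <;> simp [hi, hxy, Ne.symm]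

theorem exists_hammingDist_le_and_hammingDist_le [DecidableEq ι] {u w : ∀ i, β i} {k l : ℕ}
    (h : hammingDist u w ≤ k + l) :
    ∃ v : ∀ i, β i, hammingDist u v ≤ k ∧ hammingDist v w ≤ l := by
  set D : Finset ι := {i | u i ≠ w i}
  obtain ⟨S, hSD, hS⟩ := exists_subset_card_eq (min_le_right k #D)
  refine ⟨fun i => if i ∈ S then w i else u i, ?_, ?_⟩
  · calc hammingDist u _ ≤ #S := card_le_card fun i => by
          simp only [mem_filter, mem_univ, true_and]; split_ifs with hi <;> simp [hi]
      _ ≤ k := hS ▸ min_le_left _ _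
  · calc hammingDist _ w ≤ #(D \ S) := card_le_card fun i => by
          simp only [D, mem_filter, mem_sdiff, mem_univ, true_and]; split_ifs with hi <;> simp [hi]
      _ ≤ l := by
          have : #D = hammingDist u w := rfl
          rw [card_sdiff_of_subset hSD, hS]; omega

theorem exists_hammingDist_le_of_le_hammingDist {m x y z : ∀ i, β i} {a b c : ℕ}
    (hxy : hammingDist m x + hammingDist m y ≤ a + b)
    (hxz : hammingDist m x + hammingDist m z ≤ a + c) (ha : a ≤ hammingDist m x) :
    ∃ v : ∀ i, β i,
      hammingDist v x ≤ a ∧ hammingDist v y ≤ b ∧ hammingDist v z ≤ c := by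
  classical
  obtain ⟨v, hmv, hvx⟩ := exists_hammingDist_le_and_hammingDist_le (k := hammingDist m x - a)
    (l := a) (u := m) (w := x) (by omega)
  have hvy := hammingDist_triangle v m y
  have hvz := hammingDist_triangle v m z
  rw [hammingDist_comm v m] at hvy hvz
  exact ⟨v, hvx, by omega, by omega⟩

end

theorem exists_majority {ι : Type*} (x y z : ι → ZMod 2) :
    ∃ m : ι → ZMod 2, ∀ i, (m i = x i ∨ m i = y i) ∧ (m i = x i ∨ m i = z i) ∧
      (m i = y i ∨ m i = z i) := by
  have majority : ∀ p q r : ZMod 2,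
      ∃ t, (t = p ∨ t = q) ∧ (t = p ∨ t = r) ∧ (t = q ∨ t = r) := by decide
  choose m hm using fun i => majority (x i) (y i) (z i)
  exact ⟨m, hm⟩

theorem stmt_0 (n : ℕ) (x y z : Fin n → ZMod 2) (a b c : ℕ)
    (hxy : hammingDist x y ≤ a + b)
    (hxz : hammingDist x z ≤ a + c)
    (hyz : hammingDist y z ≤ b + c) :
    ∃ v : Fin n → ZMod 2,
      hammingDist v x ≤ a ∧ hammingDist v y ≤ b ∧ hammingDist v z ≤ c := by
  obtain ⟨m, hm⟩ := exists_majority x y z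
  have hmxy := hammingDist_add_hammingDist_eq_of_forall fun i => (hm i).1
  have hmxz := hammingDist_add_hammingDist_eq_of_forall fun i => (hm i).2.1
  have hmyz := hammingDist_add_hammingDist_eq_of_forall fun i => (hm i).2.2
  by_cases ha : a ≤ hammingDist m x
  · exact exists_hammingDist_le_of_le_hammingDist (m := m) (by omega) (by omega) ha
  by_cases hb : b ≤ hammingDist m y
  · obtain ⟨v, hvy, hvx, hvz⟩ :=
      exists_hammingDist_le_of_le_hammingDist (m := m) (x := y) (y := x) (z := z)
        (a := b) (b := a) (c := c) (by omega) (by omega) hb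
    exact ⟨v, hvx, hvy, hvz⟩
  by_cases hc : c ≤ hammingDist m z
  · obtain ⟨v, hvz, hvx, hvy⟩ :=
      exists_hammingDist_le_of_le_hammingDist (m := m) (x := z) (y := x) (z := y)
        (a := c) (b := a) (c := b) (by omega) (by omega) hc
    exact ⟨v, hvx, hvy, hvz⟩
  exact ⟨m, by omega, by omega, by omega⟩
end

section
/- Let M be a shattered m × n zero-one matrix with m, n ≥ 4. Then every independent set of at most 3 vertices in the Albert graph A_M has a common neighbor. -/
/-- Vertices of the Albert graph: `a i`, `b i` for rows, `c j`, `d j` for columns. -/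
inductive AlbertVertex (m n : ℕ) where
  | a : Fin m → AlbertVertex m n
  | b : Fin m → AlbertVertex m n
  | c : Fin n → AlbertVertex m n
  | d : Fin n → AlbertVertex m n
  deriving DecidableEq

/-- Adjacency relation of the Albert graph of a 0-1 matrix `M`. -/
def albertAdj {m n : ℕ} (M : Fin m → Fin n → Bool) :
    AlbertVertex m n → AlbertVertex m n → Prop
  | .a i, .b i' => i = i'
  | .b i, .a i' => i = i'
  | .c j, .d j' => j = j'
  | .d j, .c j' => j = j'
  | .a i, .c j => M i j = true
  | .c j, .a i => M i j = true
  | .b i, .d j => M i j = true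
  | .d j, .b i => M i j = true
  | .a i, .d j => M i j = false
  | .d j, .a i => M i j = false
  | .b i, .c j => M i j = false
  | .c j, .b i => M i j = false
  | _, _ => False

/-- The Albert graph `A_M` of a 0-1 matrix `M`. -/
def albertGraph {m n : ℕ} (M : Fin m → Fin n → Bool) :
    SimpleGraph (AlbertVertex m n) where
  Adj := albertAdj M
  symm := by
    constructor
    intro x y h
    cases x <;> cases y <;> simp_all [albertAdj]
  loopless := by
    constructor
    intro x h
    cases x <;> simp_all [albertAdj]

/-- A 0-1 matrix is *shattered* if any three distinct rows realize all four
column-patterns `aaa`, `aab`, `aba`, `baa` (up to complement), and similarly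
for any three distinct columns. -/
def Shattered {m n : ℕ} (M : Fin m → Fin n → Bool) : Prop :=
  (∀ i₁ i₂ i₃ : Fin m, i₁ ≠ i₂ → i₁ ≠ i₃ → i₂ ≠ i₃ →
    (∃ j, M i₁ j = M i₂ j ∧ M i₂ j = M i₃ j) ∧
    (∃ j, M i₁ j = M i₂ j ∧ M i₂ j ≠ M i₃ j) ∧
    (∃ j, M i₁ j = M i₃ j ∧ M i₁ j ≠ M i₂ j) ∧
    (∃ j, M i₂ j = M i₃ j ∧ M i₁ j ≠ M i₂ j)) ∧
  (∀ j₁ j₂ j₃ : Fin n, j₁ ≠ j₂ → j₁ ≠ j₃ → j₂ ≠ j₃ →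
    (∃ i, M i j₁ = M i j₂ ∧ M i j₂ = M i j₃) ∧
    (∃ i, M i j₁ = M i j₂ ∧ M i j₂ ≠ M i j₃) ∧
    (∃ i, M i j₁ = M i j₃ ∧ M i j₁ ≠ M i j₂) ∧
    (∃ i, M i j₂ = M i j₃ ∧ M i j₁ ≠ M i j₂))

/-!
Read `a i`, `b i` as row `i` with sign `true`, `false` and `c j`, `d j` as column `j` with sign
`true`, `false`; a row and a column vertex are adjacent exactly when `M i j = (s == t)`.
Transposing `M` exchanges rows and columns, so we may assume that the independent set `S` has at
most one column vertex `y`. If it has one, the partner of `y` (`c j ↔ d j`) is adjacent to `y` and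
to every row vertex not adjacent to `y`. Otherwise `S` consists of at most three row vertices with
well-defined signs, and shattering yields a column realizing this sign pattern up to complement;
that column, with the matching sign, is a common neighbour.
-/

open Finset

section

variable {m n : ℕ}

def RowsShattered (M : Fin m → Fin n → Bool) : Prop :=
  ∀ i₁ i₂ i₃ : Fin m, i₁ ≠ i₂ → i₁ ≠ i₃ → i₂ ≠ i₃ →
    (∃ j, M i₁ j = M i₂ j ∧ M i₂ j = M i₃ j) ∧
    (∃ j, M i₁ j = M i₂ j ∧ M i₂ j ≠ M i₃ j) ∧
    (∃ j, M i₁ j = M i₃ j ∧ M i₁ j ≠ M i₂ j) ∧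
    (∃ j, M i₂ j = M i₃ j ∧ M i₁ j ≠ M i₂ j)

theorem shattered_iff (M : Fin m → Fin n → Bool) :
    Shattered M ↔ RowsShattered M ∧ RowsShattered (Function.swap M) :=
  Iff.rfl

theorem Bool.eq_beq_beq_of_beq_eq_beq {x₁ x s₁ s : Bool} (h : (x₁ == x) = (s₁ == s)) :
    x = (s == (x₁ == s₁)) := by
  decide +revert

namespace RowsShattered

variable {M : Fin m → Fin n → Bool}

theorem exists_beq_eq (hM : RowsShattered M) {i₁ i₂ i₃ : Fin m}
    (h₁₂ : i₁ ≠ i₂) (h₁₃ : i₁ ≠ i₃) (h₂₃ : i₂ ≠ i₃) (e₂ e₃ : Bool) :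
    ∃ j, (M i₁ j == M i₂ j) = e₂ ∧ (M i₁ j == M i₃ j) = e₃ := by
  obtain ⟨⟨j₁, h₁⟩, ⟨j₂, h₂⟩, ⟨j₃, h₃⟩, ⟨j₄, h₄⟩⟩ := hM i₁ i₂ i₃ h₁₂ h₁₃ h₂₃
  cases e₂ <;> cases e₃
  · exact ⟨j₄, by grind⟩
  · exact ⟨j₃, by grind⟩
  · exact ⟨j₂, by grind⟩
  · exact ⟨j₁, by grind⟩

theorem exists_col_eq_beq (hM : RowsShattered M) (hm : 3 ≤ m) {R : Finset (Fin m)}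
    (hR : #R ≤ 3) (σ : Fin m → Bool) : ∃ j t, ∀ i ∈ R, M i j = (σ i == t) := by
  obtain ⟨R', hRR', hR'⟩ := exists_superset_card_eq hR (by simpa using hm)
  obtain ⟨i₁, i₂, i₃, h₁₂, h₁₃, h₂₃, rfl⟩ := card_eq_three.mp hR'
  obtain ⟨j, h₂, h₃⟩ := hM.exists_beq_eq h₁₂ h₁₃ h₂₃ (σ i₁ == σ i₂) (σ i₁ == σ i₃)
  refine ⟨j, M i₁ j == σ i₁, fun i hi => ?_⟩
  have hi' := hRR' hi
  simp only [mem_insert, mem_singleton] at hi'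
  rcases hi' with rfl | rfl | rfl
  · exact Bool.eq_beq_beq_of_beq_eq_beq (by simp)
  · exact Bool.eq_beq_beq_of_beq_eq_beq h₂
  · exact Bool.eq_beq_beq_of_beq_eq_beq h₃

end RowsShattered

namespace AlbertVertex

def isRow : AlbertVertex m n → Bool
  | a _ | b _ => true
  | c _ | d _ => false

def partner : AlbertVertex m n → AlbertVertex m n
  | a i => b i
  | b i => a i
  | c j => d j
  | d j => c j

def col (j : Fin n) : Bool → AlbertVertex m n
  | true => c j
  | false => d j

def transpose : AlbertVertex m n → AlbertVertex n m
  | a i => c i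
  | b i => d i
  | c j => a j
  | d j => b j

@[simp]
theorem transpose_transpose (x : AlbertVertex m n) : x.transpose.transpose = x := by
  cases x <;> rfl

@[simp]
theorem isRow_transpose (x : AlbertVertex m n) : x.transpose.isRow = !x.isRow := by
  cases x <;> rfl

end AlbertVertex

open AlbertVertex

variable (M : Fin m → Fin n → Bool)

theorem albertGraph_adj_partner (x : AlbertVertex m n) : (albertGraph M).Adj x.partner x := by
  cases x <;> simp [albertGraph, albertAdj, partner]

theorem albertGraph_adj_partner_of_not_adj {x y : AlbertVertex m n} (hxy : x.isRow ≠ y.isRow)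
    (h : ¬(albertGraph M).Adj x y) : (albertGraph M).Adj x.partner y := by
  cases x <;> cases y <;> simp_all [albertGraph, albertAdj, partner, isRow]

theorem albertGraph_adj_col_a (i : Fin m) (j : Fin n) (t : Bool) :
    (albertGraph M).Adj (col j t) (a i) ↔ M i j = t := by
  cases t <;> simp [albertGraph, albertAdj, col]

theorem albertGraph_adj_col_b (i : Fin m) (j : Fin n) (t : Bool) :
    (albertGraph M).Adj (col j t) (b i) ↔ M i j = !t := by
  cases t <;> simp [albertGraph, albertAdj, col]

theorem albertGraph_swap_adj_transpose {x y : AlbertVertex m n} :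
    (albertGraph (Function.swap M)).Adj x.transpose y.transpose ↔ (albertGraph M).Adj x y := by
  cases x <;> cases y <;> simp [albertGraph, albertAdj, transpose]

theorem SimpleGraph.IsIndepSet.image_transpose {S : Finset (AlbertVertex m n)}
    (hind : (albertGraph M).IsIndepSet S) :
    (albertGraph (Function.swap M)).IsIndepSet (S.image transpose : Finset _) := by
  simp only [coe_image]
  rintro _ ⟨x, hx, rfl⟩ _ ⟨y, hy, rfl⟩ hxy
  rw [albertGraph_swap_adj_transpose]
  exact hind hx hy fun h => hxy (h ▸ rfl)

theorem exists_adj_forall_of_forall_isRow (hm : 3 ≤ m) (hM : RowsShattered M)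
    {S : Finset (AlbertVertex m n)} (hS : #S ≤ 3) (hind : (albertGraph M).IsIndepSet S)
    (hrow : ∀ x ∈ S, x.isRow) : ∃ v, ∀ x ∈ S, (albertGraph M).Adj v x := by
  have hab {i : Fin m} (ha : a i ∈ S) (hb : b i ∈ S) : False :=
    hind ha hb (by simp) (by simp [albertGraph, albertAdj])
  set R := univ.filter fun i => a i ∈ S ∨ b i ∈ S
  have hRS : #R ≤ #S := by
    refine card_le_card_of_injOn (fun i => if a i ∈ S then a i else b i) ?_ ?_
    · intro i hi
      by_cases ha : a i ∈ S <;> simp_all [R]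
    · intro i _ i' _
      by_cases ha : a i ∈ S <;> by_cases ha' : a i' ∈ S <;> simp [ha, ha']
  obtain ⟨j, t, hj⟩ := hM.exists_col_eq_beq hm (hRS.trans hS) fun i => decide (a i ∈ S)
  refine ⟨col j t, fun x hx => ?_⟩
  cases x with
  | a i => simpa [albertGraph_adj_col_a, hx] using hj i (by simp [R, hx])
  | b i =>
    have ha : a i ∉ S := fun ha => hab ha hx
    simpa [albertGraph_adj_col_b, ha] using hj i (by simp [R, hx])
  | c _ | d _ => simpa [isRow] using hrow _ hx

theorem exists_adj_forall_of_card_filter_not_isRow_le_one (hm : 3 ≤ m) (hM : RowsShattered M)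
    {S : Finset (AlbertVertex m n)} (hS : #S ≤ 3) (hind : (albertGraph M).IsIndepSet S)
    (hcol : #(S.filter fun x => ¬x.isRow) ≤ 1) : ∃ v, ∀ x ∈ S, (albertGraph M).Adj v x := by
  by_cases hrow : ∀ x ∈ S, x.isRow
  · exact exists_adj_forall_of_forall_isRow M hm hM hS hind hrow
  simp only [not_forall, Bool.not_eq_true] at hrow
  obtain ⟨y, hyS, hy⟩ := hrow
  refine ⟨y.partner, fun x hx => ?_⟩
  obtain rfl | hxy := eq_or_ne x y
  · exact albertGraph_adj_partner M x
  have hxr : x.isRow = true := by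
    by_contra hxr
    exact hxy (card_le_one.mp hcol x (by simp_all) y (by simp_all))
  exact albertGraph_adj_partner_of_not_adj M (by simp [hxr, hy]) (hind hyS hx hxy.symm)

theorem exists_adj_forall_of_card_filter_isRow_le_one (hn : 3 ≤ n)
    (hM : RowsShattered (Function.swap M)) {S : Finset (AlbertVertex m n)} (hS : #S ≤ 3)
    (hind : (albertGraph M).IsIndepSet S) (hrow : #(S.filter fun x => x.isRow) ≤ 1) :
    ∃ v, ∀ x ∈ S, (albertGraph M).Adj v x := by
  obtain ⟨v, hv⟩ := exists_adj_forall_of_card_filter_not_isRow_le_one (Function.swap M) hn hM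
    (card_image_le.trans hS) (hind.image_transpose M)
    (by rw [filter_image]; exact card_image_le.trans (by simpa using hrow))
  refine ⟨v.transpose, fun x hx => ?_⟩
  have hvx := hv x.transpose (mem_image_of_mem _ hx)
  rwa [← albertGraph_swap_adj_transpose (Function.swap M), transpose_transpose] at hvx

end

theorem stmt_7 {m n : ℕ} (hm : 4 ≤ m) (hn : 4 ≤ n)
    (M : Fin m → Fin n → Bool) (hM : Shattered M)
    (S : Finset (AlbertVertex m n)) (hS : S.card ≤ 3)
    (hind : ∀ x ∈ S, ∀ y ∈ S, x ≠ y → ¬ (albertGraph M).Adj x y) :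
    ∃ v, ∀ x ∈ S, (albertGraph M).Adj v x := by
  obtain ⟨hMrow, hMcol⟩ := (shattered_iff M).mp hM
  have hind : (albertGraph M).IsIndepSet S := hind
  have hsplit := card_filter_add_card_filter_not (s := S) fun x => x.isRow
  by_cases hcol : #(S.filter fun x => ¬x.isRow) ≤ 1
  · exact exists_adj_forall_of_card_filter_not_isRow_le_one M (by omega) hMrow hS hind hcol
  · exact exists_adj_forall_of_card_filter_isRow_le_one M (by omega) hMcol hS hind (by omega)
end

section
/- Let A(n) (n ≥ 4) be the graph with vertices (i,x) for 1 ≤ i ≤ n and x ∈ Z/4, where (i,x) ~ (i,x+1) for all i, x, and (i,x) ~ (i',x+2) whenever i ≠ i'. Then A(n) is triangle-free, twin-free, and every independent set of at most 3 vertices has a common neighbor. -/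
/-!
Adjacency in `A(n)` depends only on whether two rows coincide and on the difference of the two
values in `ZMod 4`, so an injection of rows `Fin m ↪ Fin n` induces a graph embedding
`A(m) ↪g A(n)`. Any three vertices of `A(n)` lie in the image of a copy of `A(4)` (this is where
`n ≥ 4` enters: three pairwise nonadjacent vertices with equal values in three distinct rows have
their common neighbours only in a fourth row), and all three properties are preserved and reflected
by such embeddings. On `A(4)`, a graph with 16 vertices, they are a finite check.
-/

/-- Albert's graph `A(n)`: vertices `(i, x)` with `i ∈ Fin n`, `x ∈ Z/4`;
`(i,x) ~ (i,x+1)` and `(i,x) ~ (i',x+2)` for `i ≠ i'`. -/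
def albertA (n : ℕ) : SimpleGraph (Fin n × ZMod 4) where
  Adj p q := (p.1 = q.1 ∧ (q.2 = p.2 + 1 ∨ p.2 = q.2 + 1)) ∨
    (p.1 ≠ q.1 ∧ q.2 = p.2 + 2)
  symm := by
    refine ⟨?_⟩
    rintro ⟨i, x⟩ ⟨i', x'⟩ (⟨h1, h2⟩ | ⟨h1, h2⟩)
    · exact Or.inl ⟨h1.symm, h2.symm⟩
    · refine Or.inr ⟨h1.symm, ?_⟩
      rw [h2, add_assoc, show (2 : ZMod 4) + 2 = 0 by decide, add_zero]
  loopless := by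
    refine ⟨?_⟩
    rintro ⟨i, x⟩ (⟨-, h | h⟩ | ⟨h, -⟩) <;> simp_all <;> exact absurd h (by decide)

open Finset

lemma Function.Embedding.exists_fin_subset_range {α : Type*} [Fintype α] {m : ℕ} (s : Finset α)
    (hs : #s ≤ m) (hm : m ≤ Fintype.card α) : ∃ e : Fin m ↪ α, ↑s ⊆ Set.range e := by
  obtain ⟨t, hst, -, rfl⟩ := exists_subsuperset_card_eq (subset_univ s) hs (by simpa using hm)
  obtain ⟨e, he⟩ := exists_of_card_eq_finset (by simp : Fintype.card (Fin #t) = #t)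
  refine ⟨e, fun x hx => ?_⟩
  obtain ⟨i, -, hi⟩ := mem_map.mp (he ▸ hst hx)
  exact ⟨i, hi⟩

lemma Finset.Nonempty.exists_subset_triple_of_card_le_three {α : Type*} [DecidableEq α]
    {s : Finset α} (hs : s.Nonempty) (h3 : #s ≤ 3) : ∃ a ∈ s, ∃ b ∈ s, ∃ c ∈ s, s ⊆ {a, b, c} := by
  have h1 : 1 ≤ #s := hs.card_pos
  interval_cases h : #s
  · obtain ⟨a, rfl⟩ := card_eq_one.mp h
    exact ⟨a, by simp, a, by simp, a, by simp, by simp⟩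
  · obtain ⟨a, b, -, rfl⟩ := card_eq_two.mp h
    exact ⟨a, by simp, b, by simp, b, by simp, by simp⟩
  · obtain ⟨a, b, c, -, -, -, rfl⟩ := card_eq_three.mp h
    exact ⟨a, by simp, b, by simp, c, by simp, subset_refl _⟩

namespace albertA

instance (n : ℕ) : DecidableRel (albertA n).Adj := fun p q =>
  inferInstanceAs (Decidable ((p.1 = q.1 ∧ (q.2 = p.2 + 1 ∨ p.2 = q.2 + 1)) ∨
    (p.1 ≠ q.1 ∧ q.2 = p.2 + 2)))

def embedding {m n : ℕ} (e : Fin m ↪ Fin n) : albertA m ↪g albertA n where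
  toFun p := (e p.1, p.2)
  inj' p q h := by
    simp only [Prod.ext_iff, e.injective.eq_iff] at h ⊢
    exact h
  map_rel_iff' := by
    intro p q
    change (e p.1 = e q.1 ∧ (q.2 = p.2 + 1 ∨ p.2 = q.2 + 1)) ∨ (e p.1 ≠ e q.1 ∧ q.2 = p.2 + 2) ↔ _
    rw [e.injective.eq_iff, e.injective.ne_iff]
    rfl

lemma exists_embedding_four_mem_range {n : ℕ} (hn : 4 ≤ n) (a b c : Fin n × ZMod 4) :
    ∃ f : albertA 4 ↪g albertA n, a ∈ Set.range f ∧ b ∈ Set.range f ∧ c ∈ Set.range f := by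
  obtain ⟨e, he⟩ := Function.Embedding.exists_fin_subset_range {a.1, b.1, c.1}
    (card_le_three.trans (by norm_num : 3 ≤ 4)) (by simpa using hn)
  have mem_range (p : Fin n × ZMod 4) (hp : p.1 ∈ ({a.1, b.1, c.1} : Finset (Fin n))) :
      p ∈ Set.range (embedding e) := by
    obtain ⟨i, hi⟩ := he hp
    exact ⟨(i, p.2), Prod.ext hi rfl⟩
  exact ⟨embedding e, mem_range a (by simp), mem_range b (by simp), mem_range c (by simp)⟩

lemma four_not_adj_of_adj_of_adj :
    ∀ a b c : Fin 4 × ZMod 4, (albertA 4).Adj a b → (albertA 4).Adj b c → ¬(albertA 4).Adj a c := by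
  decide

lemma four_eq_of_forall_adj_iff :
    ∀ p q : Fin 4 × ZMod 4, (∀ v, (albertA 4).Adj p v ↔ (albertA 4).Adj q v) → p = q := by
  decide

lemma four_exists_common_neighbor :
    ∀ a b c : Fin 4 × ZMod 4, ¬(albertA 4).Adj a b → ¬(albertA 4).Adj a c →
      ¬(albertA 4).Adj b c →
      ∃ v, (albertA 4).Adj v a ∧ (albertA 4).Adj v b ∧ (albertA 4).Adj v c := by
  decide

variable {n : ℕ}

lemma not_adj_of_adj_of_adj (hn : 4 ≤ n) {a b c : Fin n × ZMod 4}
    (hab : (albertA n).Adj a b) (hbc : (albertA n).Adj b c) : ¬(albertA n).Adj a c := by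
  obtain ⟨f, ⟨a, rfl⟩, ⟨b, rfl⟩, ⟨c, rfl⟩⟩ := exists_embedding_four_mem_range hn a b c
  simp only [f.map_adj_iff] at hab hbc ⊢
  exact four_not_adj_of_adj_of_adj a b c hab hbc

lemma cliqueFree_three (hn : 4 ≤ n) : (albertA n).CliqueFree 3 := by
  rintro t ht
  obtain ⟨a, b, c, hab, hac, hbc, -⟩ := SimpleGraph.is3Clique_iff.mp ht
  exact not_adj_of_adj_of_adj hn hab hbc hac

lemma eq_of_forall_adj_iff (hn : 4 ≤ n) {p q : Fin n × ZMod 4}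
    (h : ∀ v, (albertA n).Adj p v ↔ (albertA n).Adj q v) : p = q := by
  obtain ⟨f, ⟨p, rfl⟩, ⟨q, rfl⟩, -⟩ := exists_embedding_four_mem_range hn p q q
  refine congrArg f (four_eq_of_forall_adj_iff p q fun v => ?_)
  simpa only [f.map_adj_iff] using h (f v)

lemma exists_common_neighbor (hn : 4 ≤ n) {a b c : Fin n × ZMod 4}
    (hab : ¬(albertA n).Adj a b) (hac : ¬(albertA n).Adj a c) (hbc : ¬(albertA n).Adj b c) :
    ∃ v, (albertA n).Adj v a ∧ (albertA n).Adj v b ∧ (albertA n).Adj v c := by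
  obtain ⟨f, ⟨a, rfl⟩, ⟨b, rfl⟩, ⟨c, rfl⟩⟩ := exists_embedding_four_mem_range hn a b c
  simp only [f.map_adj_iff] at hab hac hbc
  obtain ⟨v, hva, hvb, hvc⟩ := four_exists_common_neighbor a b c hab hac hbc
  exact ⟨f v, f.map_adj_iff.mpr hva, f.map_adj_iff.mpr hvb, f.map_adj_iff.mpr hvc⟩

end albertA

theorem stmt_9 (n : ℕ) (hn : 4 ≤ n) :
    (albertA n).CliqueFree 3 ∧
    (∀ p q : Fin n × ZMod 4,
      (albertA n).neighborSet p = (albertA n).neighborSet q → p = q) ∧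
    (∀ S : Finset (Fin n × ZMod 4), S.card ≤ 3 →
      (∀ p ∈ S, ∀ q ∈ S, p ≠ q → ¬ (albertA n).Adj p q) →
      ∃ v, ∀ p ∈ S, (albertA n).Adj v p) := by
  refine ⟨albertA.cliqueFree_three hn, fun p q h => albertA.eq_of_forall_adj_iff hn fun v => ?_,
    fun S hS hindep => ?_⟩
  · simpa only [SimpleGraph.mem_neighborSet] using Set.ext_iff.mp h v
  rcases S.eq_empty_or_nonempty with rfl | hne
  · exact ⟨(⟨0, by omega⟩, 0), by simp⟩
  have hnonadj : ∀ p ∈ S, ∀ q ∈ S, ¬(albertA n).Adj p q := fun p hp q hq => by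
    by_cases hpq : p = q
    · exact hpq ▸ (albertA n).irrefl
    · exact hindep p hp q hq hpq
  obtain ⟨a, ha, b, hb, c, hc, hSabc⟩ := hne.exists_subset_triple_of_card_le_three hS
  obtain ⟨v, hva, hvb, hvc⟩ := albertA.exists_common_neighbor hn
    (hnonadj a ha b hb) (hnonadj a ha c hc) (hnonadj b hb c hc)
  refine ⟨v, fun p hp => ?_⟩
  rcases mem_insert.mp (hSabc hp) with rfl | hp
  · exact hva
  rcases mem_insert.mp hp with rfl | hp
  · exact hvb
  · rwa [mem_singleton.mp hp]
end

section
/- For a triangle-free graph G and k ≥ 2, property (E_k) holds if and only if property (E_k') holds. -/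
variable {V : Type*}

/-- A finite set of vertices is independent if its elements are pairwise nonadjacent. -/
def IndepSet (G : SimpleGraph V) (S : Finset V) : Prop :=
  ∀ x ∈ S, ∀ y ∈ S, x ≠ y → ¬ G.Adj x y

/-- Property `(E_k)`: for every `A` with `|A| ≤ k` and every independent `B ⊆ A`
there is a vertex adjacent to every vertex of `B` and to no vertex of `A \ B`. -/
def PropEk (G : SimpleGraph V) (k : ℕ) : Prop :=
  ∀ A : Finset V, A.card ≤ k → ∀ B ⊆ A, IndepSet G B →
    ∃ v, (∀ x ∈ B, G.Adj v x) ∧ ∀ x ∈ A, x ∉ B → ¬ G.Adj v x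

/-- Property `(E_k')`: for every independent `A` with `|A| = k` and every `B ⊆ A`
there is a vertex adjacent to every vertex of `B` and to no vertex of `A \ B`;
moreover every independent set of fewer than `k` vertices is contained in an
independent set of cardinality `k`. -/
def PropEk' (G : SimpleGraph V) (k : ℕ) : Prop :=
  (∀ A : Finset V, A.card = k → IndepSet G A → ∀ B ⊆ A,
    ∃ v, (∀ x ∈ B, G.Adj v x) ∧ ∀ x ∈ A, x ∉ B → ¬ G.Adj v x) ∧
  (∀ S : Finset V, S.card < k → IndepSet G S →
    ∃ A : Finset V, S ⊆ A ∧ IndepSet G A ∧ A.card = k)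

/-- Property `(Adj_k)`: every independent set of at most `k` vertices has a
common neighbor. -/
def PropAdjk (G : SimpleGraph V) (k : ℕ) : Prop :=
  ∀ S : Finset V, S.card ≤ k → IndepSet G S → ∃ v, ∀ x ∈ S, G.Adj v x

/-!
(E_k) gives (E_k') directly, except for the extension property: an independent set `S` with
`|S| < k` grows by a vertex `w` nonadjacent to `S ∪ {v}`, where `v` is a common neighbour of `S`,
so that `w ∉ S`.

Conversely, (E_k') gives (E_k) for independent sets `A`, by first extending `A` to size `k`.
For arbitrary `A` and independent `B ⊆ A`, the vertices of `A \ B` with a neighbour in `B` are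
never adjacent to a common neighbour of `B`, as `G` is triangle-free. Each remaining vertex of
`A \ B` is dominated by adding one vertex at a time to `B`, keeping the set independent and of
size at most `k`; a common neighbour of the enlarged set then has the required pattern on `A`.
-/

open Finset

theorem SimpleGraph.CliqueFree.not_adj_of_adj_of_adj {G : SimpleGraph V} (hG : G.CliqueFree 3)
    {a b c : V} (hab : G.Adj a b) (hac : G.Adj a c) : ¬G.Adj b c := fun hbc =>
  G.isIndepSet_neighborSet_of_triangleFree hG a hab hac (G.ne_of_adj hbc) hbc

section

variable {G : SimpleGraph V} {k : ℕ}

theorem indepSet_empty : IndepSet G ∅ := by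
  simp [IndepSet]

theorem IndepSet.mono {A B : Finset V} (hA : IndepSet G A) (hBA : B ⊆ A) : IndepSet G B :=
  fun x hx y hy => hA x (hBA hx) y (hBA hy)

theorem IndepSet.insert [DecidableEq V] {S : Finset V} {v : V} (hS : IndepSet G S)
    (hv : ∀ x ∈ S, ¬G.Adj v x) : IndepSet G (insert v S) := by
  intro x hx y hy hxy
  rw [mem_insert] at hx hy
  rcases hx with rfl | hx <;> rcases hy with rfl | hy
  · exact absurd rfl hxy
  · exact hv y hy
  · exact fun hxy' => hv x hx hxy'.symm
  · exact hS x hx y hy hxy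

theorem IndepSet.union [DecidableEq V] {S T : Finset V} (hS : IndepSet G S) (hT : IndepSet G T)
    (hST : ∀ x ∈ S, ∀ y ∈ T, ¬G.Adj x y) : IndepSet G (S ∪ T) := by
  intro x hx y hy hxy
  rw [mem_union] at hx hy
  rcases hx with hx | hx <;> rcases hy with hy | hy
  · exact hS x hx y hy hxy
  · exact hST x hx y hy
  · exact fun hxy' => hST y hy x hx hxy'.symm
  · exact hT x hx y hy hxy

theorem exists_maximal_indepSet_subset (G : SimpleGraph V) (C : Finset V) :
    ∃ D ⊆ C, IndepSet G D ∧ ∀ c ∈ C, c ∉ D → ∃ d ∈ D, G.Adj c d := by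
  classical
  induction C using Finset.induction_on with
  | empty => exact ⟨∅, subset_rfl, indepSet_empty, by simp⟩
  | insert a C _ ih =>
    obtain ⟨D, hDC, hD, hmax⟩ := ih
    by_cases ha : ∃ d ∈ D, G.Adj a d
    · refine ⟨D, hDC.trans (subset_insert _ _), hD, fun c hc hcD => ?_⟩
      rcases mem_insert.1 hc with rfl | hc
      · exact ha
      · exact hmax c hc hcD
    · push Not at ha
      refine ⟨insert a D, insert_subset_insert _ hDC, hD.insert ha, fun c hc hcD => ?_⟩
      rcases mem_insert.1 hc with rfl | hc
      · exact absurd (mem_insert_self _ _) hcD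
      · obtain ⟨d, hd, hcd⟩ := hmax c hc fun hcD' => hcD (mem_insert_of_mem hcD')
        exact ⟨d, mem_insert_of_mem hd, hcd⟩

namespace PropEk

theorem exists_insert_indepSet [DecidableEq V] (h : PropEk G k) {S : Finset V}
    (hS : IndepSet G S) (hSk : #S < k) : ∃ w ∉ S, IndepSet G (insert w S) := by
  obtain ⟨v, hvS, -⟩ := h S hSk.le S subset_rfl hS
  obtain ⟨w, -, hw⟩ := h (insert v S) ((card_insert_le _ _).trans (Nat.succ_le_of_lt hSk)) ∅
    (empty_subset _) indepSet_empty
  have hwv : ¬G.Adj w v := hw v (mem_insert_self _ _) (notMem_empty v)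
  exact ⟨w, fun hwS => hwv (hvS w hwS).symm,
    hS.insert fun x hx => hw x (mem_insert_of_mem hx) (notMem_empty x)⟩

theorem exists_indepSet_superset (h : PropEk G k) {S : Finset V} (hS : IndepSet G S)
    (hSk : #S ≤ k) : ∃ A, S ⊆ A ∧ IndepSet G A ∧ #A = k := by
  classical
  induction hn : k - #S generalizing S with
  | zero => exact ⟨S, subset_rfl, hS, by omega⟩
  | succ n ih =>
    obtain ⟨w, hwS, hw⟩ := h.exists_insert_indepSet hS (by omega)
    have hcard : #(insert w S) = #S + 1 := card_insert_of_notMem hwS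
    obtain ⟨A, hA, hAi, hAk⟩ := ih hw (by omega) (by omega)
    exact ⟨A, (subset_insert _ _).trans hA, hAi, hAk⟩

theorem propEk' (h : PropEk G k) : PropEk' G k :=
  ⟨fun A hA hAi B hBA => h A hA.le B hBA (hAi.mono hBA),
    fun _ hSk hS => h.exists_indepSet_superset hS hSk.le⟩

end PropEk

namespace PropEk'

theorem exists_indepSet_superset (h : PropEk' G k) {S : Finset V} (hS : IndepSet G S)
    (hSk : #S ≤ k) : ∃ A, S ⊆ A ∧ IndepSet G A ∧ #A = k := by
  rcases hSk.lt_or_eq with hlt | heq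
  · exact h.2 S hlt hS
  · exact ⟨S, subset_rfl, hS, heq⟩

theorem exists_of_indepSet (h : PropEk' G k) {A B : Finset V} (hA : IndepSet G A)
    (hAk : #A ≤ k) (hBA : B ⊆ A) :
    ∃ v, (∀ x ∈ B, G.Adj v x) ∧ ∀ x ∈ A, x ∉ B → ¬G.Adj v x := by
  obtain ⟨I, hAI, hI, hIk⟩ := h.exists_indepSet_superset hA hAk
  obtain ⟨v, hvB, hvI⟩ := h.1 I hIk hI B (hBA.trans hAI)
  exact ⟨v, hvB, fun x hx => hvI x (hAI hx)⟩

theorem propAdjk (h : PropEk' G k) : PropAdjk G k := fun _ hSk hS =>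
  (h.exists_of_indepSet hS hSk subset_rfl).imp fun _ hv => hv.1

theorem exists_adj_of_nonempty (h : PropEk' G k) {W C : Finset V} (hW : IndepSet G W)
    (hC : C.Nonempty) (hWC : Disjoint W C) (hWC_adj : ∀ w ∈ W, ∀ c ∈ C, ¬G.Adj w c)
    (hcard : #W + #C ≤ k) : ∃ g ∉ C, (∀ w ∈ W, ¬G.Adj g w) ∧ ∃ c ∈ C, G.Adj g c := by
  classical
  obtain ⟨D, hDC, hD, hDmax⟩ := exists_maximal_indepSet_subset G C
  have hWD : IndepSet G (W ∪ D) := hW.union hD fun w hw d hd => hWC_adj w hw d (hDC hd)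
  obtain rfl | hDC_ss := eq_or_ssubset_of_subset hDC
  · obtain ⟨g, hgD, hgW⟩ :=
      h.exists_of_indepSet hWD ((card_union_le _ _).trans hcard) subset_union_right
    obtain ⟨c, hc⟩ := hC
    exact ⟨g, fun hg => G.loopless.irrefl g (hgD g hg),
      fun w hw => hgW w (mem_union_left _ hw) (disjoint_left.1 hWC hw), c, hc, hgD c hc⟩
  -- Otherwise `W ∪ D` extends by a vertex `x`, which lies outside `C` by maximality of `D`.
  have hWDk : #(W ∪ D) < k :=
    (card_union_le _ _).trans_lt (by have := card_lt_card hDC_ss; omega)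
  obtain ⟨I, hWDI, hI, hIk⟩ := h.exists_indepSet_superset hWD hWDk.le
  obtain ⟨x, hxI, hxWD⟩ := exists_of_ssubset (hWDI.ssubset_of_ne (by rintro rfl; omega))
  have hx : ∀ y ∈ W ∪ D, ¬G.Adj x y := fun y hy =>
    hI x hxI y (hWDI hy) (ne_of_mem_of_not_mem hy hxWD).symm
  have hxC : x ∉ C := fun hxC => by
    obtain ⟨d, hd, hxd⟩ := hDmax x hxC fun hxD => hxWD (mem_union_right _ hxD)
    exact hx d (mem_union_right _ hd) hxd
  by_cases hxC_adj : ∃ c ∈ C, G.Adj x c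
  · exact ⟨x, hxC, fun w hw => hx w (mem_union_left _ hw), hxC_adj⟩
  -- If `x` has no neighbour in `C`, a common neighbour of `D ∪ {x}` lies outside `C`.
  push Not at hxC_adj
  obtain ⟨d, hd⟩ : D.Nonempty := by
    obtain ⟨c, hc⟩ := hC
    by_cases hcD : c ∈ D
    · exact ⟨c, hcD⟩
    · obtain ⟨d, hd, -⟩ := hDmax c hc hcD
      exact ⟨d, hd⟩
  obtain ⟨g, hgxD, hgI⟩ := h.exists_of_indepSet hI hIk.le
    (insert_subset hxI (subset_union_right.trans hWDI))
  refine ⟨g, fun hgC => hxC_adj g hgC (hgxD x (mem_insert_self _ _)).symm,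
    fun w hw => hgI w (hWDI (mem_union_left _ hw)) ?_, d, hDC hd, hgxD d (mem_insert_of_mem hd)⟩
  rw [mem_insert, not_or]
  exact ⟨fun hwx => hxWD (hwx ▸ mem_union_left _ hw),
    fun hwD => disjoint_left.1 hWC hw (hDC hwD)⟩

theorem exists_indepSet_superset_dominating (h : PropEk' G k) {W C : Finset V}
    (hW : IndepSet G W) (hWC : Disjoint W C) (hWC_adj : ∀ w ∈ W, ∀ c ∈ C, ¬G.Adj w c)
    (hcard : #W + #C ≤ k) :
    ∃ W', W ⊆ W' ∧ IndepSet G W' ∧ #W' ≤ k ∧ ∀ c ∈ C, ∃ w ∈ W', G.Adj w c := by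
  classical
  induction C using Finset.strongInduction generalizing W with
  | H C ih =>
  rcases C.eq_empty_or_nonempty with rfl | hC
  · exact ⟨W, subset_rfl, hW, by simpa using hcard, by simp⟩
  obtain ⟨g, hgC, hgW, c, hc, hgc⟩ := h.exists_adj_of_nonempty hW hC hWC hWC_adj hcard
  set C' := C.filter fun x => ¬G.Adj g x
  have hC' : C' ⊂ C := filter_ssubset.2 ⟨c, hc, not_not.2 hgc⟩
  have hcard' : #(insert g W) + #C' ≤ k := by
    have := card_insert_le g W
    have := card_lt_card hC'
    omega
  obtain ⟨W', hgWW', hW', hW'k, hW'C'⟩ := ih C' hC' (hW.insert hgW)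
    (disjoint_insert_left.2 ⟨fun hg => hgC (filter_subset _ _ hg),
      hWC.mono_right (filter_subset _ _)⟩)
    (fun w hw x hx => by
      rcases mem_insert.1 hw with rfl | hw
      · exact (mem_filter.1 hx).2
      · exact hWC_adj w hw x (filter_subset _ _ hx))
    hcard'
  refine ⟨W', (subset_insert _ _).trans hgWW', hW', hW'k, fun x hx => ?_⟩
  by_cases hgx : G.Adj g x
  · exact ⟨g, hgWW' (mem_insert_self _ _), hgx⟩
  · exact hW'C' x (mem_filter.2 ⟨hx, hgx⟩)

theorem propEk (hG : G.CliqueFree 3) (h : PropEk' G k) : PropEk G k := by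
  classical
  intro A hAk B hBA hB
  set C := (A \ B).filter fun x => ∀ b ∈ B, ¬G.Adj b x
  have hC_mem : ∀ x, x ∈ C ↔ (x ∈ A ∧ x ∉ B) ∧ ∀ b ∈ B, ¬G.Adj b x := fun x => by
    simp [C]
  have hcard : #B + #C ≤ k := by
    have := card_le_card fun x hx => mem_sdiff.2 ((hC_mem x).1 hx).1
    have := card_sdiff_of_subset hBA
    have := card_le_card hBA
    omega
  obtain ⟨W, hBW, hW, hWk, hWC⟩ := h.exists_indepSet_superset_dominating hB
    (disjoint_left.2 fun b hb hbC => ((hC_mem b).1 hbC).1.2 hb)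
    (fun b hb c hc => ((hC_mem c).1 hc).2 b hb) hcard
  obtain ⟨v, hv⟩ := h.propAdjk W hWk hW
  refine ⟨v, fun b hb => hv b (hBW hb), fun x hxA hxB hvx => ?_⟩
  by_cases hxC : x ∈ C
  · obtain ⟨w, hw, hwx⟩ := hWC x hxC
    exact hG.not_adj_of_adj_of_adj (hv w hw) hvx hwx
  · obtain ⟨b, hb, hbx⟩ : ∃ b ∈ B, G.Adj b x := by simpa [hC_mem, hxA, hxB] using hxC
    exact hG.not_adj_of_adj_of_adj (hv b (hBW hb)) hvx hbx

end PropEk'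

end

theorem stmt_14_general (G : SimpleGraph V) (hG : G.CliqueFree 3)
    (k : ℕ) : PropEk G k ↔ PropEk' G k :=
  ⟨PropEk.propEk', PropEk'.propEk hG⟩

theorem stmt_14 [Fintype V] (G : SimpleGraph V) (hG : G.CliqueFree 3)
    (k : ℕ) (hk : 2 ≤ k) : PropEk G k ↔ PropEk' G k :=
  stmt_14_general G hG k
end

section
/- For a triangle-free graph G and k ≥ 3, property (E_k) holds if and only if both (Adj_k) and (E_3) hold. -/
variable {V : Type*}

namespace Stmt15Aux

variable {G : SimpleGraph V}

lemma notri (hG : G.CliqueFree 3) {a b c : V} (hab : G.Adj a b) (hbc : G.Adj b c)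
    (hac : G.Adj a c) : False := by
  classical
  apply hG {a, b, c}
  constructor
  · intro x hx y hy hxy
    simp only [Finset.coe_insert, Set.mem_insert_iff, Finset.coe_singleton,
      Set.mem_singleton_iff] at hx hy
    rcases hx with rfl | rfl | rfl <;> rcases hy with rfl | rfl | rfl <;>
      first
        | exact absurd rfl hxy
        | exact hab
        | exact hab.symm
        | exact hbc
        | exact hbc.symm
        | exact hac
        | exact hac.symm
  · rw [Finset.card_insert_of_notMem (by simp [hab.ne, hac.ne]),
      Finset.card_insert_of_notMem (by simp [hbc.ne]), Finset.card_singleton]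

/-- If `v` and `x` have the common neighbour `t` in a triangle-free graph,
then `v` and `x` are nonadjacent (this also covers `v = x`). -/
lemma nonadj_of_common (hG : G.CliqueFree 3) {v x t : V} (h1 : G.Adj v t) (h2 : G.Adj x t) :
    ¬ G.Adj v x := fun h => notri hG h h2 h1

lemma indep_subset {A B : Finset V} (h : IndepSet G B) (hs : A ⊆ B) : IndepSet G A :=
  fun x hx y hy hxy => h x (hs hx) y (hs hy) hxy

lemma indep_insert [DecidableEq V] {B : Finset V} {t : V} (hB : IndepSet G B) (ht : ∀ b ∈ B, ¬ G.Adj t b) :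
    IndepSet G (insert t B) := by
  intro x hx y hy hxy
  rcases Finset.mem_insert.mp hx with rfl | hx' <;> rcases Finset.mem_insert.mp hy with rfl | hy'
  · exact absurd rfl hxy
  · exact ht y hy'
  · exact fun h => ht x hx' h.symm
  · exact hB x hx' y hy' hxy

lemma indep_singleton [DecidableEq V] (a : V) : IndepSet G ({a} : Finset V) := by
  intro x hx y hy hxy
  rw [Finset.mem_singleton] at hx hy
  subst hx; subst hy; exact absurd rfl hxy

lemma indep_pair [DecidableEq V] {a b : V} (h : ¬ G.Adj a b) : IndepSet G ({a, b} : Finset V) := by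
  intro x hx y hy hxy
  simp only [Finset.mem_insert, Finset.mem_singleton] at hx hy
  rcases hx with rfl | rfl <;> rcases hy with rfl | rfl
  · exact absurd rfl hxy
  · exact h
  · exact fun h' => h h'.symm
  · exact absurd rfl hxy

/-- The crucial case: avoid a single vertex `x` nonadjacent to an independent set `B`. -/
lemma crux (hG : G.CliqueFree 3) {k : ℕ} (hk : 3 ≤ k) (hAdj : PropAdjk G k)
    (hE3 : PropEk G 3) :
    ∀ n (B : Finset V) (x : V), B.card ≤ n → IndepSet G B → x ∉ B →
      (∀ b ∈ B, ¬ G.Adj x b) → B.card + 1 ≤ k →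
      ∃ v, (∀ b ∈ B, G.Adj v b) ∧ ¬ G.Adj v x := by
  classical
  intro n
  induction n with
  | zero =>
    intro B x hn hB hxB _ _
    obtain ⟨v, h1, h2⟩ := hE3 (insert x B) (by have := Finset.card_insert_le x B; omega) B
      (Finset.subset_insert x B) hB
    exact ⟨v, h1, h2 x (Finset.mem_insert_self x B) hxB⟩
  | succ n ih =>
    intro B x hn hB hxB hxadj hck
    by_cases hsmall : B.card ≤ 2
    · obtain ⟨v, h1, h2⟩ := hE3 (insert x B) (by have := Finset.card_insert_le x B; omega) B
        (Finset.subset_insert x B) hB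
      exact ⟨v, h1, h2 x (Finset.mem_insert_self x B) hxB⟩
    · obtain ⟨b₁, b₂, b₃, hb₁, hb₂, hb₃, n12, n13, n23⟩ :=
        Finset.two_lt_card_iff.mp (by omega : 2 < B.card)
      obtain ⟨v₁, hv₁, hv₁x⟩ := ih (B.erase b₁) x
        (by rw [Finset.card_erase_of_mem hb₁]; omega)
        (indep_subset hB (Finset.erase_subset _ _))
        (fun h => hxB (Finset.mem_of_mem_erase h))
        (fun b hb => hxadj b (Finset.mem_of_mem_erase hb))
        (by have := Finset.card_erase_of_mem hb₁; omega)
      by_cases ha1 : G.Adj v₁ b₁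
      · refine ⟨v₁, fun b hb => ?_, hv₁x⟩
        rcases eq_or_ne b b₁ with rfl | h
        · exact ha1
        · exact hv₁ b (Finset.mem_erase.mpr ⟨h, hb⟩)
      obtain ⟨v₂, hv₂, hv₂x⟩ := ih (B.erase b₂) x
        (by rw [Finset.card_erase_of_mem hb₂]; omega)
        (indep_subset hB (Finset.erase_subset _ _))
        (fun h => hxB (Finset.mem_of_mem_erase h))
        (fun b hb => hxadj b (Finset.mem_of_mem_erase hb))
        (by have := Finset.card_erase_of_mem hb₂; omega)
      by_cases ha2 : G.Adj v₂ b₂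
      · refine ⟨v₂, fun b hb => ?_, hv₂x⟩
        rcases eq_or_ne b b₂ with rfl | h
        · exact ha2
        · exact hv₂ b (Finset.mem_erase.mpr ⟨h, hb⟩)
      have hv₁b₃ : G.Adj v₁ b₃ := hv₁ b₃ (Finset.mem_erase.mpr ⟨n13.symm, hb₃⟩)
      have hv₂b₃ : G.Adj v₂ b₃ := hv₂ b₃ (Finset.mem_erase.mpr ⟨n23.symm, hb₃⟩)
      have hv₂b₁ : G.Adj v₂ b₁ := hv₂ b₁ (Finset.mem_erase.mpr ⟨n12, hb₁⟩)
      have hn12' : ¬ G.Adj v₁ v₂ := nonadj_of_common hG hv₁b₃ hv₂b₃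
      have hScard : ({v₁, v₂, x} : Finset V).card ≤ 3 := by
        have h1 := Finset.card_insert_le v₁ ({v₂, x} : Finset V)
        have h2 := Finset.card_insert_le v₂ ({x} : Finset V)
        have h3 : ({x} : Finset V).card = 1 := Finset.card_singleton x
        omega
      have hSindep : IndepSet G ({v₁, v₂, x} : Finset V) := by
        intro a ha b hb hab
        simp only [Finset.mem_insert, Finset.mem_singleton] at ha hb
        rcases ha with rfl | rfl | rfl <;> rcases hb with rfl | rfl | rfl <;>
          first
            | exact absurd rfl hab
            | exact hn12'
            | exact fun h => hn12' h.symm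
            | exact hv₁x
            | exact fun h => hv₁x h.symm
            | exact hv₂x
            | exact fun h => hv₂x h.symm
      obtain ⟨z, hz⟩ := hAdj {v₁, v₂, x} (le_trans hScard hk) hSindep
      have hzv₁ : G.Adj z v₁ := hz v₁ (by simp)
      have hzv₂ : G.Adj z v₂ := hz v₂ (by simp)
      have hzx : G.Adj z x := hz x (by simp)
      have hzB : ∀ b ∈ B, ¬ G.Adj z b := by
        intro b hb
        rcases eq_or_ne b b₁ with rfl | hne
        · exact nonadj_of_common hG hzv₂ hv₂b₁.symm
        · exact nonadj_of_common hG hzv₁ (hv₁ b (Finset.mem_erase.mpr ⟨hne, hb⟩)).symm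
      have hznB : z ∉ B := fun h => hxadj z h hzx.symm
      obtain ⟨v, hv⟩ := hAdj (insert z B)
        (by rw [Finset.card_insert_of_notMem hznB]; omega)
        (indep_insert hB hzB)
      exact ⟨v, fun b hb => hv b (Finset.mem_insert_of_mem hb),
        nonadj_of_common hG (hv z (Finset.mem_insert_self z B)) hzx.symm⟩

/-- Main lemma for the backward direction. -/
lemma main (hG : G.CliqueFree 3) {k : ℕ} (hk : 3 ≤ k) (hAdj : PropAdjk G k)
    (hE3 : PropEk G 3) :
    ∀ n (B D : Finset V), D.card ≤ n → IndepSet G B → Disjoint B D →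
      B.card + D.card ≤ k →
      ∃ v, (∀ b ∈ B, G.Adj v b) ∧ ∀ x ∈ D, ¬ G.Adj v x := by
  classical
  intro n
  induction n with
  | zero =>
    intro B D hD hB _ hcard
    have hDe : D = ∅ := Finset.card_eq_zero.mp (Nat.le_zero.mp hD)
    subst hDe
    obtain ⟨v, hv⟩ := hAdj B (by simpa using hcard) hB
    exact ⟨v, hv, by simp⟩
  | succ n ih =>
    intro B D hDn hB hdisj hcard
    by_cases hDe : D = ∅
    · subst hDe
      obtain ⟨v, hv⟩ := hAdj B (by simpa using hcard) hB
      exact ⟨v, hv, by simp⟩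
    have hD1 : 1 ≤ D.card := Finset.card_pos.mpr (Finset.nonempty_iff_ne_empty.mpr hDe)
    by_cases hred : ∃ x ∈ D, ∃ b ∈ B, G.Adj x b
    · obtain ⟨x, hxD, b, hbB, hadj⟩ := hred
      obtain ⟨v, hvB, hvD⟩ := ih B (D.erase x)
        (by rw [Finset.card_erase_of_mem hxD]; omega) hB
        (Finset.disjoint_left.mpr fun a haB haD =>
          Finset.disjoint_left.mp hdisj haB (Finset.mem_of_mem_erase haD))
        (by have := Finset.card_erase_of_mem hxD; omega)
      refine ⟨v, hvB, fun d hd => ?_⟩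
      rcases eq_or_ne d x with rfl | hne
      · exact nonadj_of_common hG (hvB b hbB) hadj
      · exact hvD d (Finset.mem_erase.mpr ⟨hne, hd⟩)
    push_neg at hred
    have hxB' : ∀ x ∈ D, x ∉ B := fun x hx h => Finset.disjoint_left.mp hdisj h hx
    by_cases hsmall : B.card + D.card ≤ 3
    · obtain ⟨v, h1, h2⟩ := hE3 (B ∪ D) (le_trans (Finset.card_union_le B D) hsmall) B
        Finset.subset_union_left hB
      exact ⟨v, h1, fun x hx => h2 x (Finset.mem_union_right B hx) (hxB' x hx)⟩
    by_cases hone : D.card = 1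
    · obtain ⟨x, rfl⟩ := Finset.card_eq_one.mp hone
      obtain ⟨v, h1, h2⟩ := crux hG hk hAdj hE3 B.card B x le_rfl hB
        (hxB' x (Finset.mem_singleton_self x))
        (fun b hb => hred x (Finset.mem_singleton_self x) b hb)
        (by simpa using hcard)
      refine ⟨v, h1, fun d hd => ?_⟩
      rw [Finset.mem_singleton.mp hd]; exact h2
    have hD2 : 2 ≤ D.card := by omega
    by_cases h3a : ∃ x₀ ∈ D, ∃ y ∈ D, ¬ G.Adj x₀ y ∧ x₀ ≠ y
    · obtain ⟨x₀, hx₀, y, hy, hnadj, hne⟩ := h3a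
      obtain ⟨v₀, hv₀B, hv₀D⟩ := ih B (D.erase y)
        (by rw [Finset.card_erase_of_mem hy]; omega) hB
        (Finset.disjoint_left.mpr fun a haB haD =>
          Finset.disjoint_left.mp hdisj haB (Finset.mem_of_mem_erase haD))
        (by have := Finset.card_erase_of_mem hy; omega)
      by_cases hvy : G.Adj v₀ y
      · have hnv₀x₀ : ¬ G.Adj v₀ x₀ := hv₀D x₀ (Finset.mem_erase.mpr ⟨hne, hx₀⟩)
        have hPcard : ({v₀, x₀} : Finset V).card ≤ k := by
          have h1 := Finset.card_insert_le v₀ ({x₀} : Finset V)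
          have h2 : ({x₀} : Finset V).card = 1 := Finset.card_singleton x₀
          omega
        obtain ⟨t, ht⟩ := hAdj {v₀, x₀} hPcard (indep_pair hnv₀x₀)
        have htv₀ : G.Adj t v₀ := ht v₀ (by simp)
        have htx₀ : G.Adj t x₀ := ht x₀ (by simp)
        have htB : ∀ b ∈ B, ¬ G.Adj t b := fun b hb =>
          nonadj_of_common hG htv₀ (hv₀B b hb).symm
        have htnB : t ∉ B := fun h => hred x₀ hx₀ t h htx₀.symm
        have htnD : t ∉ D := by
          intro hmem
          rcases eq_or_ne t y with rfl | hty
          · exact hnadj htx₀.symm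
          · exact hv₀D t (Finset.mem_erase.mpr ⟨hty, hmem⟩) htv₀.symm
        obtain ⟨w, hwB, hwD⟩ := ih (insert t B) (D.erase x₀)
          (by rw [Finset.card_erase_of_mem hx₀]; omega)
          (indep_insert hB htB)
          (Finset.disjoint_left.mpr fun a ha haD => by
            rcases Finset.mem_insert.mp ha with rfl | haB
            · exact htnD (Finset.mem_of_mem_erase haD)
            · exact Finset.disjoint_left.mp hdisj haB (Finset.mem_of_mem_erase haD))
          (by
            have h1 := Finset.card_insert_le t B
            have h2 := Finset.card_erase_of_mem hx₀
            omega)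
        refine ⟨w, fun b hb => hwB b (Finset.mem_insert_of_mem hb), fun d hd => ?_⟩
        rcases eq_or_ne d x₀ with rfl | hnd
        · exact nonadj_of_common hG (hwB t (Finset.mem_insert_self t B)) htx₀.symm
        · exact hwD d (Finset.mem_erase.mpr ⟨hnd, hd⟩)
      · refine ⟨v₀, hv₀B, fun d hd => ?_⟩
        rcases eq_or_ne d y with rfl | hnd
        · exact hvy
        · exact hv₀D d (Finset.mem_erase.mpr ⟨hnd, hd⟩)
    · push_neg at h3a
      have hDle : D.card ≤ 2 := by
        by_contra hgt
        obtain ⟨a, b, c, ha, hb, hc, nab, nac, nbc⟩ :=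
          Finset.two_lt_card_iff.mp (by omega : 2 < D.card)
        have hab : G.Adj a b := by by_contra h; exact nab (h3a a ha b hb h)
        have hbc : G.Adj b c := by by_contra h; exact nbc (h3a b hb c hc h)
        have hac : G.Adj a c := by by_contra h; exact nac (h3a a ha c hc h)
        exact notri hG hab hbc hac
      have hDeq : D.card = 2 := le_antisymm hDle hD2
      obtain ⟨x, y, hxyne, hDxy⟩ := Finset.card_eq_two.mp hDeq
      subst hDxy
      have hxD : x ∈ ({x, y} : Finset V) := by simp
      have hyD : y ∈ ({x, y} : Finset V) := by simp
      have hadjxy : G.Adj x y := by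
        by_contra h; exact hxyne (h3a x hxD y hyD h)
      have hcard2 : B.card + 2 ≤ k := by
        have : ({x, y} : Finset V).card = 2 := hDeq
        omega
      have hBpos : 0 < B.card := by
        have : ({x, y} : Finset V).card = 2 := hDeq
        omega
      obtain ⟨b₁, hb₁⟩ := Finset.card_pos.mp hBpos
      have hyB : y ∉ B := hxB' y hyD
      have hxBn : x ∉ B := hxB' x hxD
      have hn1 : 1 ≤ n := by
        have : ({x, y} : Finset V).card = 2 := hDeq
        omega
      obtain ⟨v₁, hv₁B, hv₁y'⟩ := ih B {y} (by simpa using hn1) hB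
        (Finset.disjoint_singleton_right.mpr hyB)
        (by have : ({y} : Finset V).card = 1 := Finset.card_singleton y; omega)
      have hv₁y : ¬ G.Adj v₁ y := hv₁y' y (Finset.mem_singleton_self y)
      by_cases hv₁x : G.Adj v₁ x
      · obtain ⟨p, hpB, hpx'⟩ := ih B {x} (by simpa using hn1) hB
          (Finset.disjoint_singleton_right.mpr hxBn)
          (by have : ({x} : Finset V).card = 1 := Finset.card_singleton x; omega)
        have hpx : ¬ G.Adj p x := hpx' x (Finset.mem_singleton_self x)
        by_cases hpy : G.Adj p y
        · have hv₁b₁ : G.Adj v₁ b₁ := hv₁B b₁ hb₁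
          have hpb₁ : G.Adj p b₁ := hpB b₁ hb₁
          have hb₁y : b₁ ≠ y := fun h => hyB (h ▸ hb₁)
          have hv₁ney : v₁ ≠ y := fun h => hred y hyD b₁ hb₁ (h ▸ hv₁b₁)
          have hA₁card : ({y, b₁, v₁} : Finset V).card ≤ 3 := by
            have h1 := Finset.card_insert_le y ({b₁, v₁} : Finset V)
            have h2 := Finset.card_insert_le b₁ ({v₁} : Finset V)
            have h3 : ({v₁} : Finset V).card = 1 := Finset.card_singleton v₁
            omega
          obtain ⟨q, hq1, hq2⟩ := hE3 {y, b₁, v₁} hA₁card {y}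
            (by simp) (indep_singleton y)
          have hqy : G.Adj q y := hq1 y (Finset.mem_singleton_self y)
          have hqb₁ : ¬ G.Adj q b₁ := hq2 b₁ (by simp) (by simp [hb₁y])
          have hqv₁ : ¬ G.Adj q v₁ := hq2 v₁ (by simp) (by simp [hv₁ney])
          have hqnp : q ≠ p := fun h => hqb₁ (h ▸ hpb₁)
          have hqnx : q ≠ x := fun h => hqv₁ (h ▸ hv₁x.symm)
          have hA₂card : ({p, x, q} : Finset V).card ≤ 3 := by
            have h1 := Finset.card_insert_le p ({x, q} : Finset V)
            have h2 := Finset.card_insert_le x ({q} : Finset V)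
            have h3 : ({q} : Finset V).card = 1 := Finset.card_singleton q
            omega
          have hB₂sub : ({p, x} : Finset V) ⊆ ({p, x, q} : Finset V) := by
            intro a ha
            simp only [Finset.mem_insert, Finset.mem_singleton] at ha ⊢
            tauto
          obtain ⟨t, ht1, ht2⟩ := hE3 {p, x, q} hA₂card {p, x} hB₂sub (indep_pair hpx)
          have htp : G.Adj t p := ht1 p (by simp)
          have htx : G.Adj t x := ht1 x (by simp)
          have htq : ¬ G.Adj t q := ht2 q (by simp)
            (by simp only [Finset.mem_insert, Finset.mem_singleton]; push_neg
                exact ⟨hqnp, hqnx⟩)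
          have htB : ∀ b ∈ B, ¬ G.Adj t b := fun b hb =>
            nonadj_of_common hG htp (hpB b hb).symm
          have htnB : t ∉ B := fun h => hred x hxD t h htx.symm
          have htny : t ≠ y := fun h => htq (h ▸ hqy.symm)
          obtain ⟨w, hwB, hwy'⟩ := ih (insert t B) {y} (by simpa using hn1)
            (indep_insert hB htB)
            (Finset.disjoint_singleton_right.mpr (by
              simp only [Finset.mem_insert]
              push_neg
              exact ⟨fun h => htny h.symm, hyB⟩))
            (by
              have h1 := Finset.card_insert_le t B
              have h2 : ({y} : Finset V).card = 1 := Finset.card_singleton y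
              omega)
          have hwt : G.Adj w t := hwB t (Finset.mem_insert_self t B)
          have hwy : ¬ G.Adj w y := hwy' y (Finset.mem_singleton_self y)
          refine ⟨w, fun b hb => hwB b (Finset.mem_insert_of_mem hb), fun d hd => ?_⟩
          rcases Finset.mem_insert.mp hd with rfl | hd'
          · exact nonadj_of_common hG hwt htx.symm
          · rw [Finset.mem_singleton.mp hd']; exact hwy
        · refine ⟨p, hpB, fun d hd => ?_⟩
          rcases Finset.mem_insert.mp hd with rfl | hd'
          · exact hpx
          · rw [Finset.mem_singleton.mp hd']; exact hpy
      · refine ⟨v₁, hv₁B, fun d hd => ?_⟩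
        rcases Finset.mem_insert.mp hd with rfl | hd'
        · exact hv₁x
        · rw [Finset.mem_singleton.mp hd']; exact hv₁y

end Stmt15Aux

theorem stmt_15 [Fintype V] (G : SimpleGraph V) (hG : G.CliqueFree 3)
    (k : ℕ) (hk : 3 ≤ k) :
    PropEk G k ↔ (PropAdjk G k ∧ PropEk G 3) := by
  classical
  constructor
  · intro hEk
    refine ⟨fun S hS hSi => ?_, fun A hA B hBA hBi => hEk A (hA.trans hk) B hBA hBi⟩
    obtain ⟨v, h1, _⟩ := hEk S hS S Finset.Subset.rfl hSi
    exact ⟨v, h1⟩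
  · rintro ⟨hAdj, hE3⟩
    intro A hA B hBA hBi
    have hdisj : Disjoint B (A \ B) :=
      Finset.disjoint_left.mpr fun a haB haD => (Finset.mem_sdiff.mp haD).2 haB
    have hcard : B.card + (A \ B).card ≤ k := by
      have h1 := Finset.card_sdiff_of_subset hBA
      have h2 := Finset.card_le_card hBA
      omega
    obtain ⟨v, h1, h2⟩ := Stmt15Aux.main hG hk hAdj hE3 (A \ B).card B (A \ B) le_rfl
      hBi hdisj hcard
    exact ⟨v, h1, fun x hxA hxB => h2 x (Finset.mem_sdiff.mpr ⟨hxA, hxB⟩)⟩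
end

section
/- The Clebsch graph, defined as the Cayley graph on (Z/2)^4 with connection set consisting of the four unit vectors and the all-ones vector, is triangle-free, 5-regular, twin-free, and every independent set of at most 3 vertices has a common neighbor. -/
/-!
Translations `x ↦ t + x` of `(Z/2)^4` preserve Hamming distance, hence are automorphisms of the
Clebsch graph. Each of the four properties is therefore decided by the configurations containing
the vertex `0`, whose neighbours are the four unit vectors and the all-ones vector; for these a
finite check suffices (e.g. the sum of two of the five neighbours of `0` has weight `2` or `3`,
so no two of them are adjacent).
-/

/-- The Clebsch graph: vertices `(Z/2)^4`, adjacent iff the Hamming distance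
is `1` or `4` (i.e. the difference is a unit vector or the all-ones vector). -/
def clebsch : SimpleGraph (Fin 4 → ZMod 2) where
  Adj x y := hammingDist x y = 1 ∨ hammingDist x y = 4
  symm := ⟨by intro x y h; rwa [hammingDist_comm]⟩
  loopless := ⟨by intro x h; rw [hammingDist_self] at h; omega⟩

instance : DecidableRel clebsch.Adj := fun x y => by
  dsimp [clebsch]; infer_instance

theorem Finset.exists_eq_insert_insert_singleton_of_card_le_three {α : Type*} [DecidableEq α]
    {s : Finset α} (hne : s.Nonempty) (hs : s.card ≤ 3) : ∃ a b c, s = {a, b, c} := by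
  interval_cases hc : s.card
  · exact absurd (Finset.card_eq_zero.mp hc) hne.ne_empty
  · obtain ⟨a, rfl⟩ := Finset.card_eq_one.mp hc
    exact ⟨a, a, a, by simp⟩
  · obtain ⟨a, b, -, rfl⟩ := Finset.card_eq_two.mp hc
    exact ⟨a, a, b, by simp⟩
  · obtain ⟨a, b, c, -, -, -, rfl⟩ := Finset.card_eq_three.mp hc
    exact ⟨a, b, c, rfl⟩

namespace SimpleGraph

theorem exists_common_neighbor_of_card_le_three {V : Type*} [DecidableEq V] [Nonempty V]
    {G : SimpleGraph V}
    (h : ∀ a b c, ¬G.Adj a b → ¬G.Adj a c → ¬G.Adj b c →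
      ∃ v, G.Adj v a ∧ G.Adj v b ∧ G.Adj v c)
    (s : Finset V) (hs : s.card ≤ 3) (hind : ∀ x ∈ s, ∀ y ∈ s, x ≠ y → ¬G.Adj x y) :
    ∃ v, ∀ x ∈ s, G.Adj v x := by
  rcases s.eq_empty_or_nonempty with rfl | hne
  · exact ⟨Classical.arbitrary V, by simp⟩
  obtain ⟨a, b, c, rfl⟩ := Finset.exists_eq_insert_insert_singleton_of_card_le_three hne hs
  have hindep : ∀ x ∈ ({a, b, c} : Finset V), ∀ y ∈ ({a, b, c} : Finset V), ¬G.Adj x y :=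
    fun x hx y hy => if hxy : x = y then hxy ▸ G.irrefl else hind x hx y hy hxy
  obtain ⟨v, hva, hvb, hvc⟩ := h a b c (hindep a (by simp) b (by simp))
    (hindep a (by simp) c (by simp)) (hindep b (by simp) c (by simp))
  exact ⟨v, by simp [hva, hvb, hvc]⟩

variable {M : Type*} [AddGroup M]

def IsAddLeftInvariant (G : SimpleGraph M) : Prop :=
  ∀ t x y, G.Adj (t + x) (t + y) ↔ G.Adj x y

namespace IsAddLeftInvariant

variable {G : SimpleGraph M}

theorem adj_iff_adj_zero (hG : G.IsAddLeftInvariant) (x y : M) :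
    G.Adj x y ↔ G.Adj 0 (-x + y) := by
  rw [← hG (-x) x y, neg_add_cancel]

theorem cliqueFree_three (hG : G.IsAddLeftInvariant)
    (h0 : ∀ y z, G.Adj 0 y → G.Adj 0 z → ¬G.Adj y z) : G.CliqueFree 3 := by
  classical
  intro s hs
  obtain ⟨a, b, c, hab, hac, hbc, rfl⟩ := is3Clique_iff.mp hs
  rw [hG.adj_iff_adj_zero] at hab hac
  exact h0 _ _ hab hac ((hG (-a) b c).mpr hbc)

theorem isRegularOfDegree [Fintype M] [DecidableRel G.Adj]
    (hG : G.IsAddLeftInvariant) {d : ℕ} (h0 : G.degree 0 = d) :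
    G.IsRegularOfDegree d := by
  intro v
  let translate : G ≃g G := ⟨Equiv.addLeft v, hG v _ _⟩
  rw [← add_zero v]
  exact (translate.degree_eq 0).trans h0

theorem eq_of_adj_iff (hG : G.IsAddLeftInvariant)
    (h0 : ∀ y, (∀ z, G.Adj 0 z ↔ G.Adj y z) → y = 0) (x y : M)
    (hxy : ∀ z, G.Adj x z ↔ G.Adj y z) : x = y := by
  refine neg_add_eq_zero.mp (h0 _ fun z => ?_)
  rw [← hG x 0 z, ← hG x (-x + y) z, add_zero, add_neg_cancel_left]
  exact hxy (x + z)

theorem exists_common_neighbor (hG : G.IsAddLeftInvariant)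
    (h0 : ∀ y z, ¬G.Adj 0 y → ¬G.Adj 0 z → ¬G.Adj y z →
      ∃ v, G.Adj v 0 ∧ G.Adj v y ∧ G.Adj v z)
    (a b c : M) (hab : ¬G.Adj a b) (hac : ¬G.Adj a c) (hbc : ¬G.Adj b c) :
    ∃ v, G.Adj v a ∧ G.Adj v b ∧ G.Adj v c := by
  rw [hG.adj_iff_adj_zero] at hab hac
  obtain ⟨v, hva, hvb, hvc⟩ := h0 _ _ hab hac (mt (hG (-a) b c).mp hbc)
  refine ⟨a + v, ?_, ?_, ?_⟩
  · simpa using (hG a v 0).mpr hva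
  · simpa using (hG a v _).mpr hvb
  · simpa using (hG a v _).mpr hvc

end IsAddLeftInvariant

end SimpleGraph

open SimpleGraph

theorem clebsch_isAddLeftInvariant : clebsch.IsAddLeftInvariant := by
  intro t x y
  simp only [clebsch, hammingDist_eq_hammingNorm, neg_add_rev, add_assoc, neg_add_cancel_left]

theorem clebsch_degree_zero : clebsch.degree 0 = 5 := by decide

theorem clebsch_not_adj_of_adj_zero :
    ∀ y z : Fin 4 → ZMod 2, clebsch.Adj 0 y → clebsch.Adj 0 z → ¬clebsch.Adj y z := by
  decide

theorem clebsch_eq_zero_of_adj_iff :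
    ∀ y : Fin 4 → ZMod 2, (∀ z, clebsch.Adj 0 z ↔ clebsch.Adj y z) → y = 0 := by
  decide

theorem clebsch_exists_common_neighbor_zero :
    ∀ y z : Fin 4 → ZMod 2, ¬clebsch.Adj 0 y → ¬clebsch.Adj 0 z → ¬clebsch.Adj y z →
      ∃ v, clebsch.Adj v 0 ∧ clebsch.Adj v y ∧ clebsch.Adj v z := by
  decide

theorem stmt_18 :
    clebsch.CliqueFree 3 ∧
    clebsch.IsRegularOfDegree 5 ∧
    (∀ x y : Fin 4 → ZMod 2,
      clebsch.neighborSet x = clebsch.neighborSet y → x = y) ∧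
    (∀ S : Finset (Fin 4 → ZMod 2), S.card ≤ 3 →
      (∀ x ∈ S, ∀ y ∈ S, x ≠ y → ¬ clebsch.Adj x y) →
      ∃ v, ∀ x ∈ S, clebsch.Adj v x) := by
  have hG := clebsch_isAddLeftInvariant
  refine ⟨hG.cliqueFree_three clebsch_not_adj_of_adj_zero,
    hG.isRegularOfDegree clebsch_degree_zero,
    fun x y hxy => hG.eq_of_adj_iff clebsch_eq_zero_of_adj_iff x y (Set.ext_iff.mp hxy),
    exists_common_neighbor_of_card_le_three
      (hG.exists_common_neighbor clebsch_exists_common_neighbor_zero)⟩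
end
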